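/- Let 0 < α < 2, let Û : S^{M−1} → (0,∞) be continuous, set m = min over s ∈ S^{M−1} of √(2·Û(s)), and define U(q) = |q|^{−α}·Û(q/|q|) for q ≠ 0. Then: (i) for every p ≠ 0 and every absolutely continuous curve γ : [0,1] → ℝ^M with γ(0) = p and γ(1) = 0, the zero-energy JM length satisfies ℓ₀(γ) ≥ (2m/(2−α))·|p|^{(2−α)/2}; and (ii) the straight radial segment γ(t) = (1−t)·p has ℓ₀(γ) = (2·√(2·Û(p/|p|))/(2−α))·|p|^{(2−α)/2}. In particular, if p/|p| is a point where √(2Û) attains its minimum m, the radial segment realizes the bound, so the minimizing geodesics from the sphere |q| = |p| to total collision at the origin are the Euclidean radial segments through the minima of the shape potential. -/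

import Mathlib

open MeasureTheory Set Classical
open scoped ENNReal

noncomputable section

/-- `γ` is absolutely continuous on `[a,b]` with (a.e.) derivative `g`. -/
def IsACOn {M : ℕ} (γ g : ℝ → EuclideanSpace ℝ (Fin M)) (a b : ℝ) : Prop :=
  IntervalIntegrable g volume a b ∧
    ∀ t ∈ Set.Icc a b, γ t = γ a + ∫ s in a..t, g s

/-- The extension of a potential `U`, positive away from the origin, by `+∞`
at the collision point `0`. -/
def Ufull {M : ℕ} (U : EuclideanSpace ℝ (Fin M) → ℝ) :
    EuclideanSpace ℝ (Fin M) → ℝ≥0∞ :=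
  fun q => if q = 0 then ⊤ else ENNReal.ofReal (U q)

/-- Zero-energy Jacobi–Maupertuis length `∫ √(2U(γ)) |γ'| dt` (extended-real valued). -/
def jmLength0 {M : ℕ} (U : EuclideanSpace ℝ (Fin M) → ℝ≥0∞)
    (γ g : ℝ → EuclideanSpace ℝ (Fin M)) (a b : ℝ) : ℝ≥0∞ :=
  ∫⁻ t in Set.Icc a b, (2 * U (γ t)) ^ ((1 : ℝ)/2) * ENNReal.ofReal ‖g t‖

/-- for a potential `U(q) = |q|^{-α} Û(q/|q|)`, `0 < α < 2`, with
`Û` continuous and positive on the sphere and `m` the minimum of `√(2Û)`: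
(i) every curve from `p ≠ 0` to total collision `0` has zero-energy JM length
at least `(2m/(2-α)) |p|^{(2-α)/2}`, and (ii) the straight radial segment
`t ↦ (1-t)p` has JM length `(2√(2Û(p/|p|))/(2-α)) |p|^{(2-α)/2}`; so the
minimizing geodesics from the sphere `|q| = |p|` to collision are the radial
segments through the minima of the shape potential. -/
theorem radial_segments_minimize_to_collision {M : ℕ} (hM : 1 ≤ M)
    {α : ℝ} (hα : 0 < α) (hα2 : α < 2)
    (U : EuclideanSpace ℝ (Fin M) → ℝ)
    (hUcont : ContinuousOn U {q | q ≠ 0})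
    (hUpos : ∀ q : EuclideanSpace ℝ (Fin M), q ≠ 0 → 0 < U q)
    (hUhom : ∀ lam > (0:ℝ), ∀ q : EuclideanSpace ℝ (Fin M), q ≠ 0 →
      U (lam • q) = lam ^ (-α) * U q)
    (m : ℝ)
    (hm : IsLeast {x : ℝ | ∃ s : EuclideanSpace ℝ (Fin M),
      ‖s‖ = 1 ∧ x = Real.sqrt (2 * U s)} m) :
    ∀ p : EuclideanSpace ℝ (Fin M), p ≠ 0 →
      -- (i) : lower bound for every curve ending at total collision
      (∀ γ g : ℝ → EuclideanSpace ℝ (Fin M),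
        IsACOn γ g 0 1 → γ 0 = p → γ 1 = 0 →
        ENNReal.ofReal (2 * m / (2 - α) * ‖p‖ ^ ((2 - α)/2))
          ≤ jmLength0 (Ufull U) γ g 0 1) ∧
      -- (ii) : the radial segment realizes the value `2√(2Û(p/|p|))/(2-α) · |p|^{(2-α)/2}`
      jmLength0 (Ufull U) (fun t => (1 - t) • p) (fun _ => -p) 0 1
        = ENNReal.ofReal
            (2 * Real.sqrt (2 * U (‖p‖⁻¹ • p)) / (2 - α) * ‖p‖ ^ ((2 - α)/2)) := by
  have h2α : (0:ℝ) < 2 - α := by linarith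
  set β : ℝ := (2 - α)/2 with hβ_def
  have hβ0 : 0 < β := by positivity
  have hβ1 : β < 1 := by rw [hβ_def]; linarith
  have hm0 : 0 ≤ m := by
    obtain ⟨s0, _, hs0⟩ := hm.1; rw [hs0]; exact Real.sqrt_nonneg _
  have hU0 : ∀ q : EuclideanSpace ℝ (Fin M), q ≠ 0 → 0 ≤ 2 * U q := by
    intro q hq; have := hUpos q hq; linarith
  have hEN : ∀ q : EuclideanSpace ℝ (Fin M), q ≠ 0 →
      (2 * Ufull U q) ^ ((1:ℝ)/2) = ENNReal.ofReal (Real.sqrt (2 * U q)) := by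
    intro q hq
    rw [Ufull]
    simp only [if_neg hq]
    rw [show (2:ℝ≥0∞) = ENNReal.ofReal 2 by norm_num,
      ← ENNReal.ofReal_mul (by norm_num : (0:ℝ) ≤ 2),
      ENNReal.ofReal_rpow_of_nonneg (hU0 q hq) (by norm_num : (0:ℝ) ≤ 1/2),
      Real.sqrt_eq_rpow]
  have hsq2 : ∀ lam : ℝ, 0 < lam → ∀ q : EuclideanSpace ℝ (Fin M), q ≠ 0 →
      Real.sqrt (2 * U (lam • q)) = lam ^ (-(α/2)) * Real.sqrt (2 * U q) := by
    intro lam hlam q hq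
    rw [hUhom lam hlam q hq,
      show 2 * (lam ^ (-α) * U q) = lam ^ (-α) * (2 * U q) by ring,
      Real.sqrt_mul (Real.rpow_nonneg hlam.le _)]
    congr 1
    rw [Real.sqrt_eq_rpow, ← Real.rpow_mul hlam.le]
    congr 1
    ring
  have hsq : ∀ q : EuclideanSpace ℝ (Fin M), q ≠ 0 →
      Real.sqrt (2 * U q) = ‖q‖ ^ (-(α/2)) * Real.sqrt (2 * U (‖q‖⁻¹ • q)) := by
    intro q hq
    have hn : (0:ℝ) < ‖q‖ := norm_pos_iff.mpr hq
    have hs' : ‖q‖⁻¹ • q ≠ 0 := smul_ne_zero (inv_ne_zero hn.ne') hq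
    calc Real.sqrt (2 * U q)
        = Real.sqrt (2 * U (‖q‖ • (‖q‖⁻¹ • q))) := by rw [smul_inv_smul₀ hn.ne']
      _ = ‖q‖ ^ (-(α/2)) * Real.sqrt (2 * U (‖q‖⁻¹ • q)) := hsq2 _ hn _ hs'
  have hunit : ∀ q : EuclideanSpace ℝ (Fin M), q ≠ 0 → ‖(‖q‖⁻¹ • q)‖ = 1 := by
    intro q hq
    have hn : (0:ℝ) < ‖q‖ := norm_pos_iff.mpr hq
    rw [norm_smul, norm_inv, norm_norm, inv_mul_cancel₀ hn.ne']
  have hmle : ∀ q : EuclideanSpace ℝ (Fin M), q ≠ 0 →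
      m ≤ Real.sqrt (2 * U (‖q‖⁻¹ • q)) := fun q hq => hm.2 ⟨‖q‖⁻¹ • q, hunit q hq, rfl⟩
  have hptw : ∀ (q : EuclideanSpace ℝ (Fin M)) (r : ℝ), q ≠ 0 → ‖q‖ ≤ r →
      ENNReal.ofReal (m * r ^ (-(α/2))) ≤ (2 * Ufull U q) ^ ((1:ℝ)/2) := by
    intro q r hq hqr
    rw [hEN q hq]
    apply ENNReal.ofReal_le_ofReal
    have hn : (0:ℝ) < ‖q‖ := norm_pos_iff.mpr hq
    have h1 : r ^ (-(α/2)) ≤ ‖q‖ ^ (-(α/2)) :=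
      Real.rpow_le_rpow_of_nonpos hn hqr (by linarith)
    calc m * r ^ (-(α/2)) ≤ m * ‖q‖ ^ (-(α/2)) :=
          mul_le_mul_of_nonneg_left h1 hm0
      _ ≤ Real.sqrt (2 * U (‖q‖⁻¹ • q)) * ‖q‖ ^ (-(α/2)) :=
          mul_le_mul_of_nonneg_right (hmle q hq) (Real.rpow_nonneg hn.le _)
      _ = Real.sqrt (2 * U q) := by rw [hsq q hq]; ring
  intro p hp
  have hR : (0:ℝ) < ‖p‖ := norm_pos_iff.mpr hp
  constructor
  · -- part (i)
    intro γ g hAC h0 h1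
    obtain ⟨hg, hγ⟩ := hAC
    set f : ℝ → ℝ := fun t => ‖γ t‖ with hf_def
    have hf0 : f 0 = ‖p‖ := by simp [hf_def, h0]
    have hf1 : f 1 = 0 := by simp [hf_def, h1]
    have hγc : ContinuousOn γ (Icc (0:ℝ) 1) := by
      have hprim : ContinuousOn (fun t => ∫ s in (0:ℝ)..t, g s) (Icc (0:ℝ) 1) := by
        have := intervalIntegral.continuousOn_primitive_interval' hg
          (by rw [uIcc_of_le (zero_le_one)]; exact left_mem_Icc.mpr zero_le_one)
        rwa [uIcc_of_le (zero_le_one)] at this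
      exact (continuousOn_const.add hprim).congr fun t ht => hγ t ht
    have hfc : ContinuousOn f (Icc (0:ℝ) 1) := continuous_norm.comp_continuousOn hγc
    have hvar : ∀ u v : ℝ, u ∈ Icc (0:ℝ) 1 → v ∈ Icc (0:ℝ) 1 → u ≤ v →
        ENNReal.ofReal (f u - f v) ≤ ∫⁻ t in Ioc u v, ENNReal.ofReal ‖g t‖ := by
      intro u v hu hv huv
      have hsubint : ∀ w : ℝ, w ∈ Icc (0:ℝ) 1 → IntervalIntegrable g volume 0 w := by
        intro w hw
        refine hg.mono_set ?_
        rw [uIcc_of_le zero_le_one, uIcc_of_le hw.1]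
        exact Icc_subset_Icc le_rfl hw.2
      have hgi : IntervalIntegrable g volume u v := by
        refine hg.mono_set ?_
        rw [uIcc_of_le zero_le_one, uIcc_of_le huv]
        exact Icc_subset_Icc hu.1 hv.2
      have hdiff : γ v - γ u = ∫ t in u..v, g t := by
        rw [hγ u hu, hγ v hv,
          show γ 0 + (∫ s in (0:ℝ)..v, g s) - (γ 0 + ∫ s in (0:ℝ)..u, g s)
            = (∫ s in (0:ℝ)..v, g s) - ∫ s in (0:ℝ)..u, g s by abel]
        exact intervalIntegral.integral_interval_sub_left (hsubint v hv) (hsubint u hu)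
      have h1' : f u - f v ≤ ∫ t in u..v, ‖g t‖ := by
        have ha : f u - f v ≤ ‖γ u - γ v‖ := norm_sub_norm_le _ _
        have h2' : ‖γ u - γ v‖ = ‖∫ t in u..v, g t‖ := by rw [← hdiff, norm_sub_rev]
        calc f u - f v ≤ ‖∫ t in u..v, g t‖ := by rw [← h2']; exact ha
          _ ≤ ∫ t in u..v, ‖g t‖ := intervalIntegral.norm_integral_le_integral_norm huv
      calc ENNReal.ofReal (f u - f v) ≤ ENNReal.ofReal (∫ t in u..v, ‖g t‖) :=
            ENNReal.ofReal_le_ofReal h1'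
        _ = ENNReal.ofReal (∫ t in Ioc u v, ‖g t‖) := by
            rw [intervalIntegral.integral_of_le huv]
        _ = ∫⁻ t in Ioc u v, ENNReal.ofReal ‖g t‖ :=
            ofReal_integral_eq_lintegral_ofReal
              ((intervalIntegrable_iff_integrableOn_Ioc_of_le huv).mp hgi.norm)
              (Filter.Eventually.of_forall fun t => norm_nonneg _)
    have key : ∀ θ : ℝ, θ ∈ Ioo (0:ℝ) 1 →
        ENNReal.ofReal (m * ‖p‖ ^ β * ((1 - θ) * (1 - θ ^ β)⁻¹))
          ≤ jmLength0 (Ufull U) γ g 0 1 := by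
      intro θ hθ
      obtain ⟨hθ0, hθ1⟩ := hθ
      set r : ℕ → ℝ := fun k => ‖p‖ * θ ^ k with hr_def
      have hr_pos : ∀ k, 0 < r k := fun k => mul_pos hR (pow_pos hθ0 k)
      have hr_lt : ∀ k, r (k + 1) < r k := by
        intro k
        have : θ ^ (k+1) < θ ^ k := by
          rw [pow_succ]; nlinarith [pow_pos hθ0 k]
        exact mul_lt_mul_of_pos_left this hR
      have hr_le : ∀ k, r k ≤ ‖p‖ := by
        intro k
        have h' : θ ^ k ≤ 1 := pow_le_one₀ hθ0.le hθ1.le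
        calc r k = ‖p‖ * θ ^ k := rfl
          _ ≤ ‖p‖ * 1 := mul_le_mul_of_nonneg_left h' hR.le
          _ = ‖p‖ := mul_one _
      set A : ℕ → Set ℝ := fun k => {t ∈ Icc (0:ℝ) 1 | f t ≤ r (k+1)} with hA_def
      have hA_closed : ∀ k, IsClosed (A k) :=
        fun k => hfc.preimage_isClosed_of_isClosed isClosed_Icc isClosed_Iic
      have hA_ne : ∀ k, (A k).Nonempty :=
        fun k => ⟨1, right_mem_Icc.mpr zero_le_one, by rw [hf1]; exact (hr_pos (k+1)).le⟩
      have hA_bdd : ∀ k, BddBelow (A k) :=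
        fun k => BddBelow.mono (fun t ht => ht.1) bddBelow_Icc
      set s : ℕ → ℝ := fun k => sInf (A k) with hs_def
      have hsA : ∀ k, s k ∈ A k := fun k => (hA_closed k).csInf_mem (hA_ne k) (hA_bdd k)
      have hs_mem : ∀ k, s k ∈ Icc (0:ℝ) 1 := fun k => (hsA k).1
      have hs_lt : ∀ k, ∀ t ∈ Icc (0:ℝ) 1, t < s k → r (k+1) < f t := by
        intro k t ht hts
        by_contra hcon
        push_neg at hcon
        exact absurd (csInf_le (hA_bdd k) ⟨ht, hcon⟩) (not_le.mpr hts)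
      have hs_pos : ∀ k, 0 < s k := by
        intro k
        rcases (hs_mem k).1.lt_or_eq with h | h
        · exact h
        · exfalso
          have h2 := (hsA k).2
          rw [← h, hf0] at h2
          exact absurd h2 (not_le.mpr (lt_of_lt_of_le (hr_lt k) (hr_le k)))
      have hfs : ∀ k, f (s k) = r (k+1) := by
        intro k
        refine le_antisymm (hsA k).2 ?_
        have hnb : (nhdsWithin (s k) (Ico 0 (s k))).NeBot :=
          right_nhdsWithin_Ico_neBot (hs_pos k)
        have hsub : Ico (0:ℝ) (s k) ⊆ Icc (0:ℝ) 1 :=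
          fun t ht => ⟨ht.1, ht.2.le.trans (hs_mem k).2⟩
        have htend : Filter.Tendsto f (nhdsWithin (s k) (Ico 0 (s k))) (nhds (f (s k))) :=
          (hfc.continuousWithinAt (hs_mem k)).mono hsub
        refine ge_of_tendsto htend ?_
        filter_upwards [self_mem_nhdsWithin] with t ht
        exact (hs_lt k t (hsub ht) ht.2).le
      have hs_mono : ∀ k, s k ≤ s (k+1) := by
        intro k
        apply csInf_le_csInf (hA_bdd k) (hA_ne (k+1))
        intro t ht
        exact ⟨ht.1, ht.2.trans (hr_lt (k+1)).le⟩
      have hs_mono' : Monotone s := monotone_nat_of_le_succ hs_mono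
      set B : ℕ → Set ℝ := fun k => {t ∈ Icc (0:ℝ) (s k) | r k ≤ f t} with hB_def
      have hB_closed : ∀ k, IsClosed (B k) := by
        intro k
        have hx : ContinuousOn f (Icc 0 (s k)) :=
          hfc.mono (Icc_subset_Icc le_rfl (hs_mem k).2)
        exact hx.preimage_isClosed_of_isClosed isClosed_Icc isClosed_Ici
      have hB_ne : ∀ k, (B k).Nonempty :=
        fun k => ⟨0, left_mem_Icc.mpr (hs_pos k).le, by rw [hf0]; exact hr_le k⟩
      have hB_bdd : ∀ k, BddAbove (B k) :=
        fun k => BddAbove.mono (fun t ht => ht.1) bddAbove_Icc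
      set u : ℕ → ℝ := fun k => sSup (B k) with hu_def
      have huB : ∀ k, u k ∈ B k := fun k => (hB_closed k).csSup_mem (hB_ne k) (hB_bdd k)
      have hu_mem : ∀ k, u k ∈ Icc 0 (s k) := fun k => (huB k).1
      have hu_lt : ∀ k, u k < s k := by
        intro k
        rcases (hu_mem k).2.lt_or_eq with h | h
        · exact h
        · exfalso
          have h2 := (huB k).2
          rw [h, hfs k] at h2
          exact absurd h2 (not_le.mpr (hr_lt k))
      have hIub : ∀ k, ∀ t ∈ Ioc (u k) (s k), f t ≤ r k := by
        intro k t ht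
        by_contra hcon
        push_neg at hcon
        have hmem : t ∈ B k := ⟨⟨le_trans (hu_mem k).1 ht.1.le, ht.2⟩, hcon.le⟩
        exact absurd (le_csSup (hB_bdd k) hmem) (not_le.mpr ht.1)
      have hIlb : ∀ k, ∀ t ∈ Ioc (u k) (s k), r (k+1) ≤ f t := by
        intro k t ht
        have htIcc : t ∈ Icc (0:ℝ) 1 :=
          ⟨le_trans (hu_mem k).1 ht.1.le, ht.2.trans (hs_mem k).2⟩
        rcases ht.2.lt_or_eq with h | h
        · exact (hs_lt k t htIcc h).le
        · rw [h, hfs k]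
      have hsu : ∀ k, s k ≤ u (k+1) := by
        intro k
        apply le_csSup (hB_bdd (k+1))
        exact ⟨⟨(hs_mem k).1, hs_mono k⟩, by rw [hfs k]⟩
      have hchain : ∀ k l, k < l → s k ≤ u l := by
        intro k l hkl
        obtain ⟨j, rfl⟩ := Nat.exists_eq_add_of_lt hkl
        calc s k ≤ s (k + j) := hs_mono' (Nat.le_add_right _ _)
          _ ≤ u (k + j + 1) := hsu _
      have hdisj : Pairwise (Function.onFun Disjoint fun k => Ioc (u k) (s k)) := by
        intro k l hkl
        rcases hkl.lt_or_gt with h | h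
        · rw [Function.onFun, Set.Ioc_disjoint_Ioc]
          exact le_trans (min_le_left _ _) (le_trans (hchain k l h) (le_max_right _ _))
        · rw [Function.onFun, Set.Ioc_disjoint_Ioc]
          exact le_trans (min_le_right _ _) (le_trans (hchain l k h) (le_max_left _ _))
      have hsubU : (⋃ k, Ioc (u k) (s k)) ⊆ Icc (0:ℝ) 1 := by
        intro t ht
        obtain ⟨k, hk⟩ := mem_iUnion.mp ht
        exact ⟨le_trans (hu_mem k).1 hk.1.le, hk.2.trans (hs_mem k).2⟩
      have hper : ∀ k, ENNReal.ofReal ((m * (r k) ^ (-(α/2))) * (r k - r (k+1)))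
          ≤ ∫⁻ t in Ioc (u k) (s k),
              (2 * Ufull U (γ t)) ^ ((1:ℝ)/2) * ENNReal.ofReal ‖g t‖ := by
        intro k
        have hc0 : 0 ≤ m * (r k) ^ (-(α/2)) :=
          mul_nonneg hm0 (Real.rpow_nonneg (hr_pos k).le _)
        rw [ENNReal.ofReal_mul hc0]
        have step1 : ENNReal.ofReal (r k - r (k+1))
            ≤ ∫⁻ t in Ioc (u k) (s k), ENNReal.ofReal ‖g t‖ := by
          have h1' : r k - r (k+1) ≤ f (u k) - f (s k) :=
            sub_le_sub (huB k).2 (le_of_eq (hfs k))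
          calc ENNReal.ofReal (r k - r (k+1)) ≤ ENNReal.ofReal (f (u k) - f (s k)) :=
                ENNReal.ofReal_le_ofReal h1'
            _ ≤ _ := hvar (u k) (s k)
                ⟨(hu_mem k).1, (hu_mem k).2.trans (hs_mem k).2⟩ (hs_mem k) (hu_lt k).le
        calc ENNReal.ofReal (m * r k ^ (-(α/2))) * ENNReal.ofReal (r k - r (k+1))
            ≤ ENNReal.ofReal (m * r k ^ (-(α/2)))
              * ∫⁻ t in Ioc (u k) (s k), ENNReal.ofReal ‖g t‖ := mul_le_mul_right step1 _
          _ = ∫⁻ t in Ioc (u k) (s k),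
                ENNReal.ofReal (m * r k ^ (-(α/2))) * ENNReal.ofReal ‖g t‖ :=
              (lintegral_const_mul' _ _ ENNReal.ofReal_ne_top).symm
          _ ≤ ∫⁻ t in Ioc (u k) (s k),
                (2 * Ufull U (γ t)) ^ ((1:ℝ)/2) * ENNReal.ofReal ‖g t‖ := by
              apply lintegral_mono_ae
              rw [ae_restrict_iff' measurableSet_Ioc]
              refine Filter.Eventually.of_forall fun t ht => ?_
              have hft0 : (0:ℝ) < f t := lt_of_lt_of_le (hr_pos (k+1)) (hIlb k t ht)
              have hne : γ t ≠ 0 := by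
                intro hz
                rw [hf_def] at hft0
                simp only [hz, norm_zero] at hft0
                exact lt_irrefl 0 hft0
              exact mul_le_mul_left (hptw (γ t) (r k) hne (hIub k t ht)) _
      have hsum : (∑' k : ℕ, ENNReal.ofReal ((m * (r k) ^ (-(α/2))) * (r k - r (k+1))))
          ≤ jmLength0 (Ufull U) γ g 0 1 := by
        calc ∑' k : ℕ, ENNReal.ofReal ((m * (r k) ^ (-(α/2))) * (r k - r (k+1)))
            ≤ ∑' k : ℕ, ∫⁻ t in Ioc (u k) (s k),
                (2 * Ufull U (γ t)) ^ ((1:ℝ)/2) * ENNReal.ofReal ‖g t‖ :=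
              ENNReal.tsum_le_tsum hper
          _ = ∫⁻ t in ⋃ k, Ioc (u k) (s k),
                (2 * Ufull U (γ t)) ^ ((1:ℝ)/2) * ENNReal.ofReal ‖g t‖ :=
              (lintegral_iUnion (fun k => measurableSet_Ioc) hdisj _).symm
          _ ≤ jmLength0 (Ufull U) γ g 0 1 := lintegral_mono_set hsubU
      have hpowc : ∀ (x y : ℝ), 0 ≤ x → ∀ k : ℕ, ((x ^ k : ℝ)) ^ y = (x ^ y) ^ k := by
        intro x y hx k
        rw [← Real.rpow_natCast x k, ← Real.rpow_natCast (x ^ y) k, ← Real.rpow_mul hx,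
          ← Real.rpow_mul hx, mul_comm]
      have hterm : ∀ k : ℕ, (m * (r k) ^ (-(α/2))) * (r k - r (k+1))
          = (m * ‖p‖ ^ β * (1 - θ)) * (θ ^ β) ^ k := by
        intro k
        have e1 : (r k) ^ (-(α/2)) = ‖p‖ ^ (-(α/2)) * (θ ^ (-(α/2))) ^ k := by
          show (‖p‖ * θ ^ k) ^ (-(α/2)) = _
          rw [Real.mul_rpow hR.le (pow_nonneg hθ0.le k), hpowc θ _ hθ0.le k]
        have e2 : r k - r (k+1) = ‖p‖ * θ ^ k * (1 - θ) := by
          show ‖p‖ * θ ^ k - ‖p‖ * θ ^ (k+1) = _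
          ring
        have e3 : ‖p‖ ^ (-(α/2)) * ‖p‖ = ‖p‖ ^ β := by
          rw [show β = -(α/2) + 1 by rw [hβ_def]; ring, Real.rpow_add_one hR.ne']
        have e4 : (θ ^ (-(α/2)) * θ) = θ ^ β := by
          rw [show β = -(α/2) + 1 by rw [hβ_def]; ring, Real.rpow_add_one hθ0.ne']
        rw [e1, e2]
        calc m * (‖p‖ ^ (-(α/2)) * (θ ^ (-(α/2))) ^ k) * (‖p‖ * θ ^ k * (1 - θ))
            = m * (‖p‖ ^ (-(α/2)) * ‖p‖) * (1 - θ) * ((θ ^ (-(α/2)) * θ) ^ k) := by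
              rw [mul_pow]; ring
          _ = (m * ‖p‖ ^ β * (1 - θ)) * (θ ^ β) ^ k := by rw [e3, e4]
      have hx0 : 0 ≤ θ ^ β := Real.rpow_nonneg hθ0.le β
      have hx1 : θ ^ β < 1 := Real.rpow_lt_one hθ0.le hθ1 hβ0
      have hsummable : Summable (fun k : ℕ => (m * ‖p‖ ^ β * (1 - θ)) * (θ ^ β) ^ k) :=
        (summable_geometric_of_lt_one hx0 hx1).mul_left _
      have htsum' : (∑' k : ℕ, (m * ‖p‖ ^ β * (1 - θ)) * (θ ^ β) ^ k)
          = m * ‖p‖ ^ β * ((1 - θ) * (1 - θ ^ β)⁻¹) := by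
        rw [tsum_mul_left, tsum_geometric_of_lt_one hx0 hx1]; ring
      have hnn : ∀ k : ℕ, 0 ≤ (m * ‖p‖ ^ β * (1 - θ)) * (θ ^ β) ^ k := by
        intro k
        have h1θ : (0:ℝ) ≤ 1 - θ := by linarith
        exact mul_nonneg (mul_nonneg (mul_nonneg hm0 (Real.rpow_nonneg hR.le _)) h1θ)
          (pow_nonneg hx0 k)
      calc ENNReal.ofReal (m * ‖p‖ ^ β * ((1 - θ) * (1 - θ ^ β)⁻¹))
          = ENNReal.ofReal (∑' k : ℕ, (m * ‖p‖ ^ β * (1 - θ)) * (θ ^ β) ^ k) := by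
            rw [htsum']
        _ = ∑' k : ℕ, ENNReal.ofReal ((m * ‖p‖ ^ β * (1 - θ)) * (θ ^ β) ^ k) :=
            ENNReal.ofReal_tsum_of_nonneg hnn hsummable
        _ = ∑' k : ℕ, ENNReal.ofReal ((m * (r k) ^ (-(α/2))) * (r k - r (k+1))) := by
            congr 1; funext k; rw [hterm k]
        _ ≤ jmLength0 (Ufull U) γ g 0 1 := hsum
    -- pass to the limit θ → 1⁻
    have hd : HasDerivAt (fun x : ℝ => x ^ β) β 1 := by
      have := Real.hasDerivAt_rpow_const (x := (1:ℝ)) (p := β) (Or.inl one_ne_zero)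
      simpa using this
    have hslope : Filter.Tendsto (fun θ : ℝ => (1 - θ) * (1 - θ ^ β)⁻¹)
        (nhdsWithin 1 (Iio (1:ℝ))) (nhds β⁻¹) := by
      have h1' := hasDerivAt_iff_tendsto_slope.mp hd
      have h2' : Filter.Tendsto (slope (fun x : ℝ => x ^ β) 1)
          (nhdsWithin 1 (Iio (1:ℝ))) (nhds β) :=
        h1'.mono_left (nhdsWithin_mono 1 fun x hx => ne_of_lt hx)
      have h3' := h2'.inv₀ hβ0.ne'
      have heq : (fun θ : ℝ => (1 - θ) * (1 - θ ^ β)⁻¹)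
          = fun θ : ℝ => (slope (fun x : ℝ => x ^ β) 1 θ)⁻¹ := by
        funext θ
        rw [slope_def_field, Real.one_rpow, inv_div, div_eq_mul_inv,
          show (1:ℝ) - θ = -(θ - 1) by ring, show (1:ℝ) - θ ^ β = -(θ ^ β - 1) by ring,
          inv_neg, neg_mul_neg]
      rw [heq]
      exact h3'
    have htendsto : Filter.Tendsto
        (fun θ : ℝ => ENNReal.ofReal (m * ‖p‖ ^ β * ((1 - θ) * (1 - θ ^ β)⁻¹)))
        (nhdsWithin 1 (Iio (1:ℝ))) (nhds (ENNReal.ofReal (m * ‖p‖ ^ β * β⁻¹))) :=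
      (ENNReal.continuous_ofReal.tendsto _).comp (hslope.const_mul _)
    have hfinal : ENNReal.ofReal (m * ‖p‖ ^ β * β⁻¹) ≤ jmLength0 (Ufull U) γ g 0 1 := by
      refine le_of_tendsto htendsto ?_
      filter_upwards [Ioo_mem_nhdsLT_of_mem (right_mem_Ioc.mpr zero_lt_one)] with θ hθ
      exact key θ hθ
    have hgoal_eq : 2 * m / (2 - α) * ‖p‖ ^ β = m * ‖p‖ ^ β * β⁻¹ := by
      rw [hβ_def]; field_simp
    rw [hgoal_eq]
    exact hfinal
  · -- part (ii)
    rw [jmLength0]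
    set c : ℝ := Real.sqrt (2 * U p) * ‖p‖ with hc_def
    have hc0 : 0 ≤ c := mul_nonneg (Real.sqrt_nonneg _) hR.le
    have h1ae : ∀ᵐ x : ℝ ∂volume, x ≠ 1 := by
      rw [ae_iff]
      have hset : {x : ℝ | ¬x ≠ 1} = {1} := by ext x; simp
      rw [hset]
      exact measure_singleton 1
    have hae : (fun x => (2 * Ufull U ((1 - x) • p)) ^ ((1:ℝ)/2)
          * ENNReal.ofReal ‖(-p : EuclideanSpace ℝ (Fin M))‖)
        =ᵐ[volume.restrict (Icc (0:ℝ) 1)]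
        (fun x => ENNReal.ofReal (c * (1 - x) ^ (-(α/2)))) := by
      filter_upwards [ae_restrict_mem measurableSet_Icc, ae_restrict_of_ae h1ae] with x hx hx1
      have hx0 : 0 < 1 - x := sub_pos.mpr (lt_of_le_of_ne hx.2 hx1)
      have hne : (1 - x) • p ≠ 0 := smul_ne_zero hx0.ne' hp
      rw [hEN _ hne, norm_neg, ← ENNReal.ofReal_mul (Real.sqrt_nonneg _)]
      congr 1
      rw [hsq2 _ hx0 _ hp, hc_def]
      ring
    rw [lintegral_congr_ae hae]
    have hint0 : IntervalIntegrable (fun x : ℝ => (1 - x) ^ (-(α/2))) volume 0 1 := by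
      have h1' : IntervalIntegrable (fun x : ℝ => x ^ (-(α/2))) volume 0 1 :=
        intervalIntegral.intervalIntegrable_rpow' (by linarith)
      have h2' := h1'.comp_sub_left 1
      norm_num at h2'
      exact h2'.symm
    have hint : IntegrableOn (fun x : ℝ => c * (1 - x) ^ (-(α/2))) (Icc (0:ℝ) 1) volume :=
      (intervalIntegrable_iff_integrableOn_Icc_of_le zero_le_one).mp (hint0.const_mul c)
    have hnn : 0 ≤ᵐ[volume.restrict (Icc (0:ℝ) 1)] fun x : ℝ => c * (1 - x) ^ (-(α/2)) := by
      filter_upwards [ae_restrict_mem measurableSet_Icc] with x hx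
      exact mul_nonneg hc0 (Real.rpow_nonneg (by linarith [hx.2]) _)
    rw [← ofReal_integral_eq_lintegral_ofReal hint hnn]
    have hIv : (∫ x in Icc (0:ℝ) 1, c * (1 - x) ^ (-(α/2))) = c * (2 / (2 - α)) := by
      rw [integral_Icc_eq_integral_Ioc, ← intervalIntegral.integral_of_le zero_le_one,
        intervalIntegral.integral_const_mul]
      congr 1
      rw [intervalIntegral.integral_comp_sub_left (fun x : ℝ => x ^ (-(α/2))) 1]
      norm_num
      rw [integral_rpow (Or.inl (by linarith : (-1:ℝ) < -(α/2)))]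
      rw [Real.one_rpow, Real.zero_rpow (ne_of_gt (by linarith) : -(α/2) + 1 ≠ 0),
        show -(α/2) + 1 = (2 - α)/2 by ring, sub_zero, one_div_div]
    rw [hIv]
    congr 1
    rw [hc_def, hsq p hp]
    have e3 : ‖p‖ ^ (-(α/2)) * ‖p‖ = ‖p‖ ^ β := by
      rw [show β = -(α/2) + 1 by rw [hβ_def]; ring, Real.rpow_add_one hR.ne']
    rw [← e3]
    ring
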